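/- Let B be a finite set of points in ℝ^m all contained in a set S of diameter W (i.e., ‖s₁ − s₂‖ ≤ W for all s₁, s₂ ∈ S), and let 1 ≤ k ≤ |B|. Define the novelty score ρ(x; B) = (1/k) · Σ_{b ∈ N_k(x;B)} ‖x − b‖, where N_k(x; B) is a set of k nearest neighbors of x in B. If B' is obtained from B by replacing one element (with both B, B' ⊆ S and x ∈ S), then |ρ(x; B) − ρ(x; B')| ≤ W/k, provided the k-nearest-neighbor sets N_k(x;B) and N_k(x;B') differ in at most one element. -/

import Mathlib

open Finset

theorem abs_sum_sub_sum_le_of_card_sdiff_le_one {α R : Type*} [DecidableEq α] [AddCommGroup R]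
    [LinearOrder R] [IsOrderedAddMonoid R] {s t : Finset α} {f : α → R} {W : R} (hW : 0 ≤ W)
    (hcard : #s = #t) (hst : #(s \ t) ≤ 1) (hf : ∀ a ∈ s, ∀ b ∈ t, |f a - f b| ≤ W) :
    |∑ x ∈ s, f x - ∑ x ∈ t, f x| ≤ W := by
  -- Cancelling the common part `s ∩ t` leaves at most one term on each side.
  rw [← sum_sdiff_sub_sum_sdiff]
  have hts : #(t \ s) = #(s \ t) := card_sdiff_comm hcard.symm
  rcases Nat.le_one_iff_eq_zero_or_eq_one.mp hst with hempty | hsingle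
  · rw [card_eq_zero.mp hempty, card_eq_zero.mp (hts.trans hempty)]
    simpa using hW
  · obtain ⟨a, ha⟩ := card_eq_one.mp hsingle
    obtain ⟨b, hb⟩ := card_eq_one.mp (hts.trans hsingle)
    have has : a ∈ s \ t := ha ▸ mem_singleton_self a
    have hbt : b ∈ t \ s := hb ▸ mem_singleton_self b
    rw [ha, hb, sum_singleton, sum_singleton]
    exact hf a (mem_sdiff.mp has).1 b (mem_sdiff.mp hbt).1

theorem novelty_score_uniform_stability_general
    (m k : ℕ) [DecidableEq (EuclideanSpace ℝ (Fin m))]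
    (S : Set (EuclideanSpace ℝ (Fin m))) (W : ℝ)
    (hW : ∀ s₁ ∈ S, ∀ s₂ ∈ S, ‖s₁ - s₂‖ ≤ W)
    (x : EuclideanSpace ℝ (Fin m)) (hx : x ∈ S)
    (N N' : Finset (EuclideanSpace ℝ (Fin m)))
    (hN : N.card = k) (hN' : N'.card = k)
    (hNS : ∀ b ∈ N, b ∈ S) (hN'S : ∀ b ∈ N', b ∈ S)
    (hdiff : (N \ N').card ≤ 1) :
    |(1 / (k : ℝ)) * ∑ b ∈ N, ‖x - b‖ -
      (1 / (k : ℝ)) * ∑ b ∈ N', ‖x - b‖| ≤ W / k := by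
  have hW0 : 0 ≤ W := by simpa using hW x hx x hx
  have hsum : |∑ b ∈ N, ‖x - b‖ - ∑ b ∈ N', ‖x - b‖| ≤ W := by
    refine abs_sum_sub_sum_le_of_card_sdiff_le_one hW0 (hN.trans hN'.symm) hdiff
      fun a ha b hb => ?_
    calc |‖x - a‖ - ‖x - b‖| ≤ ‖(x - a) - (x - b)‖ := abs_norm_sub_norm_le _ _
      _ = ‖b - a‖ := by rw [sub_sub_sub_cancel_left]
      _ ≤ W := hW b (hN'S b hb) a (hNS a ha)
  calc |(1 / (k : ℝ)) * ∑ b ∈ N, ‖x - b‖ - (1 / (k : ℝ)) * ∑ b ∈ N', ‖x - b‖|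
      = (1 / (k : ℝ)) * |∑ b ∈ N, ‖x - b‖ - ∑ b ∈ N', ‖x - b‖| := by
        rw [← mul_sub, abs_mul, abs_of_nonneg (by positivity)]
    _ ≤ (1 / (k : ℝ)) * W := by gcongr
    _ = W / k := one_div_mul_eq_div _ _

/-- Uniform stability of the novelty score: if the k-nearest-neighbor sets
differ in at most one element and everything lies in a set of diameter `W`,
then the novelty scores differ by at most `W / k`. -/
theorem novelty_score_uniform_stability
    (m k : ℕ) (hk : 1 ≤ k) [DecidableEq (EuclideanSpace ℝ (Fin m))]
    (S : Set (EuclideanSpace ℝ (Fin m))) (W : ℝ)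
    (hW : ∀ s₁ ∈ S, ∀ s₂ ∈ S, ‖s₁ - s₂‖ ≤ W)
    (x : EuclideanSpace ℝ (Fin m)) (hx : x ∈ S)
    (N N' : Finset (EuclideanSpace ℝ (Fin m)))
    (hN : N.card = k) (hN' : N'.card = k)
    (hNS : ∀ b ∈ N, b ∈ S) (hN'S : ∀ b ∈ N', b ∈ S)
    (hdiff : (N \ N').card ≤ 1) :
    |(1 / (k : ℝ)) * ∑ b ∈ N, ‖x - b‖ -
      (1 / (k : ℝ)) * ∑ b ∈ N', ‖x - b‖| ≤ W / k :=
  novelty_score_uniform_stability_general m k S W hW x hx N N' hN hN' hNS hN'S hdiff
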